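/- arXiv:2307.13932 — 4 statements merged into one kernel-verified Lean document; each statement's English description precedes it below -/
import Mathlib

section
/- Let δ₁, δ_{2,3} ∈ (0,1], 0 < θ < min{δ₁, δ_{2,3}}, α > 0, and set δ₀ := min{θ, δ₁ - θ, δ_{2,3} - θ}. Then for every real A ≥ 1 and integer B ≥ 0, the sum over integers k₂ ≥ k₃ ≥ 0 with k₂ ≥ B and integers j₂, j₃ ≥ 1 with j₃ ≥ A of 2^{-(k₂-k₃)α} · j₂^{-1} · j₃^{-1} · (2^{-k₂} j₂^{-1} + 2^{-k₃} j₃^{-1})^{δ_{2,3}} / (j₂ j₃^{-1} + j₂^{-1} j₃)^{θ} is bounded by a constant times A^{-δ₀} · 2^{-B·min{δ₀, α}} · (B+1). -/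
/-!
Since `k₃ ≤ k₂`, `(2^{-k₂} j₂⁻¹ + 2^{-k₃} j₃⁻¹)^{δ₂₃} ≤ 2^{-k₃ δ₂₃} (j₂⁻¹ + j₃⁻¹)^{δ₂₃}`, and with
`2^{-(k₂-k₃)α}` this gives `2^{-k₂ν}`, `ν = min(δ₀, α)`. What remains of the summand only depends
on `j₂, j₃`: if `j₂ ≤ j₃`, the numerator is at most `2^{δ₂₃} j₂^{-δ₂₃}` and the denominator at
least `(j₃/j₂)^θ`, so it is at most `2^{δ₂₃} (j₂ j₃)^{-(1+μ)}` with `μ = min(θ, δ₂₃ - θ) ≥ δ₀`.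
The sum thus splits into a product: the `k`-sum is `∑_{k₂ ≥ B} (k₂ + 1) 2^{-k₂ν} ≲ (B + 1) 2^{-Bν}`,
and the `j`-sums are tails `∑_{j ≥ N} j^{-(1+μ)} ≲ N^{-μ}`, obtained by telescoping against
`j^{-μ} - (j+1)^{-μ}` (Bernoulli's inequality).
-/

open scoped ENNReal
open Finset

theorem rpow_neg_one_add_le_two_div_mul_sub {μ : ℝ} (hμ : 0 < μ) (hμ1 : μ ≤ 1) {x : ℝ}
    (hx : 1 ≤ x) : x ^ (-(1 + μ)) ≤ 2 / μ * (x ^ (-μ) - (x + 1) ^ (-μ)) := by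
  have hx0 : 0 < x := by linarith
  have hx1 : 0 < x + 1 := by linarith
  have hxμ : 0 < x ^ (-μ) := Real.rpow_pos_of_pos hx0 _
  have bernoulli : (x / (x + 1)) ^ μ ≤ 1 - μ / (x + 1) := by
    have h := rpow_one_add_le_one_add_mul_self (s := -(x + 1)⁻¹)
      (by rw [neg_le_neg_iff]; exact inv_le_one_of_one_le₀ (by linarith)) hμ.le hμ1
    convert h using 2 <;> field_simp <;> ring
  have hsucc : (x + 1) ^ (-μ) = (x / (x + 1)) ^ μ * x ^ (-μ) := by
    rw [Real.div_rpow hx0.le hx1.le, Real.rpow_neg hx0.le, Real.rpow_neg hx1.le]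
    field_simp [(Real.rpow_pos_of_pos hx0 μ).ne']
  have hpow : x ^ (-(1 + μ)) = x ^ (-μ) * x⁻¹ := by
    rw [← Real.rpow_neg_one x, ← Real.rpow_add hx0]; ring_nf
  have hinv : x⁻¹ ≤ 2 / (x + 1) := by
    rw [inv_eq_one_div, div_le_div_iff₀ hx0 hx1]; linarith
  calc x ^ (-(1 + μ)) ≤ x ^ (-μ) * (2 / (x + 1)) := by
        rw [hpow]; exact mul_le_mul_of_nonneg_left hinv hxμ.le
    _ = 2 / μ * (μ / (x + 1) * x ^ (-μ)) := by field_simp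
    _ ≤ 2 / μ * (x ^ (-μ) - (x + 1) ^ (-μ)) := by
        gcongr
        rw [hsucc]
        nlinarith

theorem sum_range_rpow_neg_one_add_le {μ : ℝ} (hμ : 0 < μ) (hμ1 : μ ≤ 1) {N : ℕ} (hN : 1 ≤ N)
    (n : ℕ) : ∑ i ∈ range n, ((N + i : ℕ) : ℝ) ^ (-(1 + μ)) ≤
      2 / μ * ((N : ℝ) ^ (-μ) - ((N + n : ℕ) : ℝ) ^ (-μ)) := by
  induction n with
  | zero => simp
  | succ n ih =>
    have hstep := rpow_neg_one_add_le_two_div_mul_sub hμ hμ1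
      (x := ((N + n : ℕ) : ℝ)) (by exact_mod_cast le_add_right hN)
    rw [sum_range_succ]
    push_cast at ih hstep ⊢
    rw [← add_assoc]
    linarith

theorem tsum_ite_le_eq_tsum_add {M : Type*} [AddCommMonoid M] [TopologicalSpace M]
    (f : ℕ → M) (N : ℕ) : ∑' k, (if N ≤ k then f k else 0) = ∑' m, f (N + m) := by
  rw [← (add_right_injective N).tsum_eq]
  · simp
  · intro k hk
    have : N ≤ k := by by_contra h; simp [h] at hk
    exact ⟨k - N, by simp; omega⟩

theorem tsum_tail_rpow_neg_one_add_le {μ : ℝ} (hμ : 0 < μ) (hμ1 : μ ≤ 1) {N : ℕ} (hN : 1 ≤ N) :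
    ∑' j : ℕ, (if N ≤ j then (j : ℝ≥0∞) ^ (-(1 + μ)) else 0) ≤
      ENNReal.ofReal (2 / μ) * (N : ℝ≥0∞) ^ (-μ) := by
  have hpos : ∀ m : ℕ, (0 : ℝ) < N + m := fun m => by norm_cast; omega
  rw [tsum_ite_le_eq_tsum_add]
  refine ENNReal.tsum_le_of_sum_range_le fun n => ?_
  have hreal : ∑ i ∈ range n, ((N + i : ℕ) : ℝ) ^ (-(1 + μ)) ≤ 2 / μ * (N : ℝ) ^ (-μ) :=
    (sum_range_rpow_neg_one_add_le hμ hμ1 hN n).trans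
      (by gcongr; exact sub_le_self _ (Real.rpow_nonneg (Nat.cast_nonneg _) _))
  calc ∑ i ∈ range n, ((N + i : ℕ) : ℝ≥0∞) ^ (-(1 + μ))
      = ENNReal.ofReal (∑ i ∈ range n, ((N + i : ℕ) : ℝ) ^ (-(1 + μ))) := by
        rw [ENNReal.ofReal_sum_of_nonneg fun i _ => Real.rpow_nonneg (Nat.cast_nonneg _) _]
        refine sum_congr rfl fun i _ => ?_
        rw [← ENNReal.ofReal_rpow_of_pos (by push_cast; exact hpos i), ENNReal.ofReal_natCast]
    _ ≤ ENNReal.ofReal (2 / μ * (N : ℝ) ^ (-μ)) := ENNReal.ofReal_le_ofReal hreal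
    _ = ENNReal.ofReal (2 / μ) * (N : ℝ≥0∞) ^ (-μ) := by
        rw [ENNReal.ofReal_mul (by positivity),
          ← ENNReal.ofReal_rpow_of_pos (by simpa using hpos 0), ENNReal.ofReal_natCast]

theorem tsum_succ_mul_two_rpow_ne_top {ν : ℝ} (hν : 0 < ν) :
    ∑' m : ℕ, ((m : ℝ≥0∞) + 1) * 2 ^ (-(m : ℝ) * ν) ≠ ⊤ := by
  set r : ℝ := 2 ^ (-ν)
  have hr : ‖r‖ < 1 := by
    rw [Real.norm_of_nonneg (by positivity)]
    exact Real.rpow_lt_one_of_one_lt_of_neg one_lt_two (neg_lt_zero.mpr hν)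
  have hterm : ∀ m : ℕ, ((m : ℝ≥0∞) + 1) * 2 ^ (-(m : ℝ) * ν) =
      ENNReal.ofReal (((m + 1).choose 1 : ℝ) * r ^ m) := by
    intro m
    rw [Nat.choose_one_right, ENNReal.ofReal_mul (by positivity), ENNReal.ofReal_natCast,
      ← Real.rpow_natCast, ← Real.rpow_mul zero_le_two, ← ENNReal.ofReal_rpow_of_pos two_pos]
    simp [mul_comm]
  simp only [hterm]
  rw [← ENNReal.ofReal_tsum_of_nonneg (fun m => by positivity)
    (summable_choose_mul_geometric_of_norm_lt_one 1 hr)]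
  exact ENNReal.ofReal_ne_top

theorem tsum_ite_le_and_le (c : ℝ≥0∞) (B k : ℕ) :
    ∑' i : ℕ, (if i ≤ k ∧ B ≤ k then c else 0) = if B ≤ k then ((k : ℝ≥0∞) + 1) * c else 0 := by
  split_ifs with hB
  · rw [tsum_eq_sum (s := range (k + 1)) fun i hi => by simp_all,
      sum_congr rfl fun i hi => if_pos ⟨Nat.lt_add_one_iff.mp (mem_range.mp hi), hB⟩]
    simp
  · simp [hB]

theorem tsum_tsum_ite_two_rpow_le (ν : ℝ) (B : ℕ) :
    ∑' k₂ : ℕ, ∑' k₃ : ℕ, (if k₃ ≤ k₂ ∧ B ≤ k₂ then (2 : ℝ≥0∞) ^ (-(k₂ : ℝ) * ν) else 0) ≤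
      (∑' m : ℕ, ((m : ℝ≥0∞) + 1) * 2 ^ (-(m : ℝ) * ν)) * 2 ^ (-(B : ℝ) * ν) *
        ((B : ℝ≥0∞) + 1) := by
  simp only [tsum_ite_le_and_le, tsum_ite_le_eq_tsum_add]
  have hsplit : ∀ m : ℕ, (((B + m : ℕ) : ℝ≥0∞) + 1) * 2 ^ (-((B + m : ℕ) : ℝ) * ν) ≤
      ((B : ℝ≥0∞) + 1) * 2 ^ (-(B : ℝ) * ν) * (((m : ℝ≥0∞) + 1) * 2 ^ (-(m : ℝ) * ν)) := by
    intro m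
    have hcard : ((B + m : ℕ) : ℝ≥0∞) + 1 ≤ ((B : ℝ≥0∞) + 1) * ((m : ℝ≥0∞) + 1) := by
      push_cast
      calc (B : ℝ≥0∞) + m + 1 ≤ B * m + (B + m + 1) := le_add_self
        _ = (B + 1) * (m + 1) := by ring
    have hpow : (2 : ℝ≥0∞) ^ (-((B + m : ℕ) : ℝ) * ν) =
        2 ^ (-(B : ℝ) * ν) * 2 ^ (-(m : ℝ) * ν) := by
      rw [← ENNReal.rpow_add _ _ two_ne_zero ENNReal.ofNat_ne_top]
      push_cast
      ring_nf
    rw [hpow]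
    calc _ ≤ (((B : ℝ≥0∞) + 1) * ((m : ℝ≥0∞) + 1)) *
          (2 ^ (-(B : ℝ) * ν) * 2 ^ (-(m : ℝ) * ν)) := by gcongr
      _ = _ := by ring
  calc _ ≤ ∑' m : ℕ, ((B : ℝ≥0∞) + 1) * 2 ^ (-(B : ℝ) * ν) *
          (((m : ℝ≥0∞) + 1) * 2 ^ (-(m : ℝ) * ν)) := ENNReal.tsum_le_tsum hsplit
    _ = _ := by rw [ENNReal.tsum_mul_left]; ring

theorem two_rpow_mul_rpow_add_le {k₂ k₃ α δ ν : ℝ} (hk₃ : 0 ≤ k₃) (hk : k₃ ≤ k₂) (hδ : 0 ≤ δ)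
    (hνα : ν ≤ α) (hνδ : ν ≤ δ) (x y : ℝ≥0∞) :
    (2 : ℝ≥0∞) ^ (-(k₂ - k₃) * α) * (2 ^ (-k₂) * x + 2 ^ (-k₃) * y) ^ δ ≤
      2 ^ (-k₂ * ν) * (x + y) ^ δ := by
  have hsum : (2 : ℝ≥0∞) ^ (-k₂) * x + 2 ^ (-k₃) * y ≤ 2 ^ (-k₃) * (x + y) := by
    rw [mul_add]
    gcongr
    exact one_le_two
  calc (2 : ℝ≥0∞) ^ (-(k₂ - k₃) * α) * (2 ^ (-k₂) * x + 2 ^ (-k₃) * y) ^ δ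
      ≤ 2 ^ (-(k₂ - k₃) * α) * (2 ^ (-k₃ * δ) * (x + y) ^ δ) := by
        grw [hsum, ENNReal.mul_rpow_of_nonneg _ _ hδ, ← ENNReal.rpow_mul]
    _ = 2 ^ (-(k₂ - k₃) * α + -k₃ * δ) * (x + y) ^ δ := by
        rw [ENNReal.rpow_add _ _ two_ne_zero ENNReal.ofNat_ne_top, mul_assoc]
    _ ≤ 2 ^ (-k₂ * ν) * (x + y) ^ δ := by
        gcongr
        · exact one_le_two
        · nlinarith [mul_nonneg (sub_nonneg.mpr hk) (sub_nonneg.mpr hνα),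
            mul_nonneg hk₃ (sub_nonneg.mpr hνδ)]

theorem inv_mul_inv_mul_rpow_div_le_of_le {δ θ μ : ℝ} (hδ : 0 ≤ δ) (hθ : 0 ≤ θ) (hμθ : μ ≤ θ)
    (hμδ : μ ≤ δ - θ) {a b : ℝ≥0∞} (ha : 1 ≤ a) (hab : a ≤ b) (hb : b ≠ ⊤) :
    a⁻¹ * b⁻¹ * (a⁻¹ + b⁻¹) ^ δ / (a * b⁻¹ + a⁻¹ * b) ^ θ ≤
      2 ^ δ * a ^ (-(1 + μ)) * b ^ (-(1 + μ)) := by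
  have ha0 : a ≠ 0 := (zero_lt_one.trans_le ha).ne'
  have haT : a ≠ ⊤ := ne_top_of_le_ne_top hb hab
  have hb1 : 1 ≤ b := ha.trans hab
  have hb0 : b ≠ 0 := (zero_lt_one.trans_le hb1).ne'
  have hnum : (a⁻¹ + b⁻¹) ^ δ ≤ 2 ^ δ * a ^ (-δ) := by
    calc (a⁻¹ + b⁻¹) ^ δ ≤ (2 * a⁻¹) ^ δ := by
          rw [two_mul]; gcongr
      _ = 2 ^ δ * a ^ (-δ) := by
          rw [ENNReal.mul_rpow_of_nonneg _ _ hδ, ENNReal.inv_rpow, ENNReal.rpow_neg]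
  have hden : a ^ (-θ) * b ^ θ ≤ (a * b⁻¹ + a⁻¹ * b) ^ θ := by
    rw [ENNReal.rpow_neg, ← ENNReal.inv_rpow, ← ENNReal.mul_rpow_of_nonneg _ _ hθ]
    gcongr
    exact le_add_self
  have hexp_a : a⁻¹ * a ^ (-δ) / a ^ (-θ) = a ^ (-1 - δ + θ) := by
    rw [ENNReal.div_eq_inv_mul, ← ENNReal.rpow_neg, neg_neg, ← ENNReal.rpow_neg_one,
      ← ENNReal.rpow_add _ _ ha0 haT, ← ENNReal.rpow_add _ _ ha0 haT]
    ring_nf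
  have hexp_b : b⁻¹ / b ^ θ = b ^ (-1 - θ) := by
    rw [ENNReal.div_eq_inv_mul, ← ENNReal.rpow_neg, ← ENNReal.rpow_neg_one,
      ← ENNReal.rpow_add _ _ hb0 hb]
    ring_nf
  calc a⁻¹ * b⁻¹ * (a⁻¹ + b⁻¹) ^ δ / (a * b⁻¹ + a⁻¹ * b) ^ θ
      ≤ a⁻¹ * b⁻¹ * (2 ^ δ * a ^ (-δ)) / (a ^ (-θ) * b ^ θ) := by gcongr
    _ = 2 ^ δ * (a⁻¹ * a ^ (-δ) / a ^ (-θ)) * (b⁻¹ / b ^ θ) := by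
        rw [ENNReal.div_eq_inv_mul, ENNReal.div_eq_inv_mul, ENNReal.div_eq_inv_mul,
          ENNReal.mul_inv (by simp [ENNReal.rpow_eq_zero_iff, ha0, haT])
            (by simp [ENNReal.rpow_eq_top_iff, ha0, haT])]
        ring
    _ ≤ 2 ^ δ * a ^ (-(1 + μ)) * b ^ (-(1 + μ)) := by
        rw [hexp_a, hexp_b]
        gcongr <;> linarith

theorem inv_mul_inv_mul_rpow_div_le {δ θ μ : ℝ} (hδ : 0 ≤ δ) (hθ : 0 ≤ θ) (hμθ : μ ≤ θ)
    (hμδ : μ ≤ δ - θ) {a b : ℝ≥0∞} (ha : 1 ≤ a) (hb : 1 ≤ b) (haT : a ≠ ⊤) (hbT : b ≠ ⊤) :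
    a⁻¹ * b⁻¹ * (a⁻¹ + b⁻¹) ^ δ / (a * b⁻¹ + a⁻¹ * b) ^ θ ≤
      2 ^ δ * a ^ (-(1 + μ)) * b ^ (-(1 + μ)) := by
  rcases le_total a b with hab | hba
  · exact inv_mul_inv_mul_rpow_div_le_of_le hδ hθ hμθ hμδ ha hab hbT
  · rw [mul_comm a⁻¹, add_comm a⁻¹, add_comm (a * b⁻¹), mul_comm a⁻¹ b, mul_comm a b⁻¹,
      mul_right_comm (2 ^ δ)]
    exact inv_mul_inv_mul_rpow_div_le_of_le hδ hθ hμθ hμδ hb hba haT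

theorem summand_le_mul_ite {δ θ α ν μ : ℝ} (hδ : 0 ≤ δ) (hθ : 0 ≤ θ) (hμθ : μ ≤ θ)
    (hμδ : μ ≤ δ - θ) (hνα : ν ≤ α) (hνδ : ν ≤ δ) (A : ℝ) (B k₂ k₃ j₂ j₃ : ℕ) :
    (if k₃ ≤ k₂ ∧ B ≤ k₂ ∧ 1 ≤ j₂ ∧ 1 ≤ j₃ ∧ A ≤ (j₃ : ℝ) then
        (2 : ℝ≥0∞) ^ (-((k₂ : ℝ) - (k₃ : ℝ)) * α) * ((j₂ : ℝ≥0∞))⁻¹ * ((j₃ : ℝ≥0∞))⁻¹ *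
          ((2 : ℝ≥0∞) ^ (-(k₂ : ℝ)) * ((j₂ : ℝ≥0∞))⁻¹ +
              (2 : ℝ≥0∞) ^ (-(k₃ : ℝ)) * ((j₃ : ℝ≥0∞))⁻¹) ^ δ /
          ((j₂ : ℝ≥0∞) * ((j₃ : ℝ≥0∞))⁻¹ + ((j₂ : ℝ≥0∞))⁻¹ * (j₃ : ℝ≥0∞)) ^ θ
      else 0) ≤
      2 ^ δ * (if k₃ ≤ k₂ ∧ B ≤ k₂ then (2 : ℝ≥0∞) ^ (-(k₂ : ℝ) * ν) else 0) *
        (if 1 ≤ j₂ then (j₂ : ℝ≥0∞) ^ (-(1 + μ)) else 0) *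
        (if ⌈A⌉₊ ≤ j₃ then (j₃ : ℝ≥0∞) ^ (-(1 + μ)) else 0) := by
  by_cases h : k₃ ≤ k₂ ∧ B ≤ k₂ ∧ 1 ≤ j₂ ∧ 1 ≤ j₃ ∧ A ≤ (j₃ : ℝ)
  · obtain ⟨hk, hB, hj₂, hj₃, hA⟩ := h
    rw [if_pos ⟨hk, hB, hj₂, hj₃, hA⟩, if_pos ⟨hk, hB⟩, if_pos hj₂, if_pos (Nat.ceil_le.mpr hA)]
    set a : ℝ≥0∞ := (j₂ : ℝ≥0∞)
    set b : ℝ≥0∞ := (j₃ : ℝ≥0∞)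
    calc (2 : ℝ≥0∞) ^ (-((k₂ : ℝ) - k₃) * α) * a⁻¹ * b⁻¹ *
          (2 ^ (-(k₂ : ℝ)) * a⁻¹ + 2 ^ (-(k₃ : ℝ)) * b⁻¹) ^ δ / (a * b⁻¹ + a⁻¹ * b) ^ θ
        = a⁻¹ * b⁻¹ * (2 ^ (-((k₂ : ℝ) - k₃) * α) *
            (2 ^ (-(k₂ : ℝ)) * a⁻¹ + 2 ^ (-(k₃ : ℝ)) * b⁻¹) ^ δ) / (a * b⁻¹ + a⁻¹ * b) ^ θ := by
          simp only [div_eq_mul_inv]; ring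
      _ ≤ a⁻¹ * b⁻¹ * (2 ^ (-(k₂ : ℝ) * ν) * (a⁻¹ + b⁻¹) ^ δ) / (a * b⁻¹ + a⁻¹ * b) ^ θ := by
          gcongr a⁻¹ * b⁻¹ * ?_ / _
          exact two_rpow_mul_rpow_add_le (Nat.cast_nonneg _) (Nat.cast_le.mpr hk) hδ hνα hνδ _ _
      _ = 2 ^ (-(k₂ : ℝ) * ν) * (a⁻¹ * b⁻¹ * (a⁻¹ + b⁻¹) ^ δ / (a * b⁻¹ + a⁻¹ * b) ^ θ) := by
          simp only [div_eq_mul_inv]; ring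
      _ ≤ 2 ^ (-(k₂ : ℝ) * ν) * (2 ^ δ * a ^ (-(1 + μ)) * b ^ (-(1 + μ))) := by
          gcongr 2 ^ (-(k₂ : ℝ) * ν) * ?_
          exact inv_mul_inv_mul_rpow_div_le hδ hθ hμθ hμδ (Nat.one_le_cast.mpr hj₂)
            (Nat.one_le_cast.mpr hj₃) (ENNReal.natCast_ne_top _) (ENNReal.natCast_ne_top _)
      _ = _ := by ring
  · rw [if_neg h]
    exact zero_le

theorem tsum_tsum_tsum_tsum_le_mul_tsum {f : ℕ → ℕ → ℕ → ℕ → ℝ≥0∞} {g : ℕ → ℕ → ℝ≥0∞}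
    {h₁ h₂ : ℕ → ℝ≥0∞} {c : ℝ≥0∞} (hf : ∀ k l m n, f k l m n ≤ c * g k l * h₁ m * h₂ n) :
    ∑' k, ∑' l, ∑' m, ∑' n, f k l m n ≤
      c * (∑' k, ∑' l, g k l) * (∑' m, h₁ m) * ∑' n, h₂ n := by
  calc _ ≤ ∑' k, ∑' l, ∑' m, ∑' n, c * g k l * h₁ m * h₂ n :=
        ENNReal.tsum_le_tsum fun k => ENNReal.tsum_le_tsum fun l =>
          ENNReal.tsum_le_tsum fun m => ENNReal.tsum_le_tsum fun n => hf k l m n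
    _ = _ := by simp only [ENNReal.tsum_mul_left, ENNReal.tsum_mul_right]

theorem natCeil_rpow_neg_le_ofReal_rpow_neg {A δ μ : ℝ} (hA : 1 ≤ A) (hδ : 0 ≤ δ) (hδμ : δ ≤ μ) :
    (⌈A⌉₊ : ℝ≥0∞) ^ (-μ) ≤ ENNReal.ofReal A ^ (-δ) := by
  have hA_ceil : ENNReal.ofReal A ≤ ⌈A⌉₊ := by
    rw [← ENNReal.ofReal_natCast]; exact ENNReal.ofReal_le_ofReal (Nat.le_ceil A)
  calc (⌈A⌉₊ : ℝ≥0∞) ^ (-μ) ≤ ENNReal.ofReal A ^ (-μ) := by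
        rw [ENNReal.rpow_neg, ENNReal.rpow_neg]
        gcongr
        linarith
    _ ≤ ENNReal.ofReal A ^ (-δ) := by
        gcongr
        exact ENNReal.one_le_ofReal.mpr hA

theorem stmt2_general (δ₁ δ₂₃ θ α : ℝ) (hδ₂₃ : δ₂₃ ∈ Set.Ioc (0:ℝ) 1)
    (hθ : 0 < θ) (hθ' : θ < min δ₁ δ₂₃) (hα : 0 < α) :
    ∃ C : ℝ≥0∞, C ≠ ⊤ ∧ ∀ (A : ℝ), 1 ≤ A → ∀ B : ℕ,
      (∑' k₂ : ℕ, ∑' k₃ : ℕ, ∑' j₂ : ℕ, ∑' j₃ : ℕ,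
          if k₃ ≤ k₂ ∧ B ≤ k₂ ∧ 1 ≤ j₂ ∧ 1 ≤ j₃ ∧ A ≤ (j₃ : ℝ) then
            (2 : ℝ≥0∞) ^ (-((k₂ : ℝ) - (k₃ : ℝ)) * α) * ((j₂ : ℝ≥0∞))⁻¹ * ((j₃ : ℝ≥0∞))⁻¹ *
              ((2 : ℝ≥0∞) ^ (-(k₂ : ℝ)) * ((j₂ : ℝ≥0∞))⁻¹ +
                  (2 : ℝ≥0∞) ^ (-(k₃ : ℝ)) * ((j₃ : ℝ≥0∞))⁻¹) ^ δ₂₃ /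
              ((j₂ : ℝ≥0∞) * ((j₃ : ℝ≥0∞))⁻¹ + ((j₂ : ℝ≥0∞))⁻¹ * (j₃ : ℝ≥0∞)) ^ θ
          else 0)
        ≤ C * (ENNReal.ofReal A) ^ (-(min θ (min (δ₁ - θ) (δ₂₃ - θ)))) *
            (2 : ℝ≥0∞) ^ (-(B : ℝ) * min (min θ (min (δ₁ - θ) (δ₂₃ - θ))) α) *
            ((B : ℝ≥0∞) + 1) := by
  obtain ⟨hδ₂₃0, hδ₂₃1⟩ := hδ₂₃
  obtain ⟨hθδ₁, hθδ₂₃⟩ := lt_min_iff.mp hθ'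
  set δ₀ := min θ (min (δ₁ - θ) (δ₂₃ - θ))
  set ν := min δ₀ α
  set μ := min θ (δ₂₃ - θ)
  have hδ₀ : 0 < δ₀ := lt_min hθ (lt_min (by linarith) (by linarith))
  have hμ : 0 < μ := lt_min hθ (by linarith)
  have hμ1 : μ ≤ 1 := (min_le_left _ _).trans (by linarith)
  have hδ₀μ : δ₀ ≤ μ := le_min (min_le_left _ _) ((min_le_right _ _).trans (min_le_right _ _))
  have hνδ₂₃ : ν ≤ δ₂₃ := (min_le_left _ _).trans ((min_le_left _ _).trans hθδ₂₃.le)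
  refine ⟨2 ^ δ₂₃ * (∑' m : ℕ, ((m : ℝ≥0∞) + 1) * 2 ^ (-(m : ℝ) * ν)) *
    ENNReal.ofReal (2 / μ) * ENNReal.ofReal (2 / μ), ?_, fun A hA B => ?_⟩
  · have := tsum_succ_mul_two_rpow_ne_top (lt_min hδ₀ hα)
    finiteness
  refine (tsum_tsum_tsum_tsum_le_mul_tsum fun k₂ k₃ j₂ j₃ =>
    summand_le_mul_ite hδ₂₃0.le hθ.le (min_le_left _ _) (min_le_right _ _) (min_le_right _ _)
      hνδ₂₃ A B k₂ k₃ j₂ j₃).trans ?_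
  calc _ ≤ 2 ^ δ₂₃ * ((∑' m : ℕ, ((m : ℝ≥0∞) + 1) * 2 ^ (-(m : ℝ) * ν)) * 2 ^ (-(B : ℝ) * ν) *
          ((B : ℝ≥0∞) + 1)) * (ENNReal.ofReal (2 / μ) * ((1 : ℕ) : ℝ≥0∞) ^ (-μ)) *
          (ENNReal.ofReal (2 / μ) * ENNReal.ofReal A ^ (-δ₀)) := by
        gcongr
        · exact tsum_tsum_ite_two_rpow_le ν B
        · exact tsum_tail_rpow_neg_one_add_le hμ hμ1 le_rfl
        · exact (tsum_tail_rpow_neg_one_add_le hμ hμ1 (Nat.one_le_ceil_iff.mpr (by linarith))).trans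
            (by gcongr; exact natCeil_rpow_neg_le_ofReal_rpow_neg hA hδ₀.le hδ₀μ)
    _ = _ := by
        rw [Nat.cast_one, ENNReal.one_rpow]
        ring

/-- The summability estimate `𝒮₃(A,B) ≲ A^{-δ₀} 2^{-B min(δ₀,α)} (B+1)` (Lemma 3.1, (JJA-1)):
sum over `k₂ ≥ k₃ ≥ 0` with `k₂ ≥ B`, and `j₂, j₃ ≥ 1` with `j₃ ≥ A`, of
`2^{-(k₂-k₃)α} j₂⁻¹ j₃⁻¹ (2^{-k₂}j₂⁻¹ + 2^{-k₃}j₃⁻¹)^{δ₂₃} / (j₂/j₃ + j₃/j₂)^θ`. -/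
theorem stmt2 (δ₁ δ₂₃ θ α : ℝ) (hδ₁ : δ₁ ∈ Set.Ioc (0:ℝ) 1) (hδ₂₃ : δ₂₃ ∈ Set.Ioc (0:ℝ) 1)
    (hθ : 0 < θ) (hθ' : θ < min δ₁ δ₂₃) (hα : 0 < α) :
    ∃ C : ℝ≥0∞, C ≠ ⊤ ∧ ∀ (A : ℝ), 1 ≤ A → ∀ B : ℕ,
      (∑' k₂ : ℕ, ∑' k₃ : ℕ, ∑' j₂ : ℕ, ∑' j₃ : ℕ,
          if k₃ ≤ k₂ ∧ B ≤ k₂ ∧ 1 ≤ j₂ ∧ 1 ≤ j₃ ∧ A ≤ (j₃ : ℝ) then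
            (2 : ℝ≥0∞) ^ (-((k₂ : ℝ) - (k₃ : ℝ)) * α) * ((j₂ : ℝ≥0∞))⁻¹ * ((j₃ : ℝ≥0∞))⁻¹ *
              ((2 : ℝ≥0∞) ^ (-(k₂ : ℝ)) * ((j₂ : ℝ≥0∞))⁻¹ +
                  (2 : ℝ≥0∞) ^ (-(k₃ : ℝ)) * ((j₃ : ℝ≥0∞))⁻¹) ^ δ₂₃ /
              ((j₂ : ℝ≥0∞) * ((j₃ : ℝ≥0∞))⁻¹ + ((j₂ : ℝ≥0∞))⁻¹ * (j₃ : ℝ≥0∞)) ^ θ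
          else 0)
        ≤ C * (ENNReal.ofReal A) ^ (-(min θ (min (δ₁ - θ) (δ₂₃ - θ)))) *
            (2 : ℝ≥0∞) ^ (-(B : ℝ) * min (min θ (min (δ₁ - θ) (δ₂₃ - θ))) α) *
            ((B : ℝ≥0∞) + 1) :=
  stmt2_general δ₁ δ₂₃ θ α hδ₂₃ hθ hθ' hα
end

section
/- Let δ₁, δ_{2,3} ∈ (0,1], 0 < θ < min{δ₁, δ_{2,3}}, and set δ₀ := min{θ, δ₁ - θ, δ_{2,3} - θ}. Then for every real A ≥ 1, the sum over integers k₂ ≥ k₁ ≥ 0 and integers j₁, j₂, j₃ ≥ 1 with j₂ ≥ A of 2^{-k₁δ₁} · j₁^{-1-δ₁} · j₂^{-1} · j₃^{-1} · (2^{-k₂} j₂^{-1} + 2^{k₁-k₂} j₃^{-1})^{δ_{2,3}} / (2^{k₁} j₁ j₂ j₃^{-1} + 2^{-k₁} j₁^{-1} j₂^{-1} j₃)^{θ} is bounded by a constant (depending only on δ₁, δ_{2,3}, θ) times A^{-δ₀}. -/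
/-!
Writing `j = 2 ^ logb 2 j`, every summand has the shape `2^P (2^Q + 2^R)^δ₂₃ / (2^S + 2^T)^θ`.
Subadditivity of `t ↦ t^δ₂₃` splits the numerator, and each of its two terms is divided by only
one of the two denominator terms, chosen so that every `jᵢ` keeps an exponent below `-1`. The
summand is then at most `2^((k₁-k₂)δ₂₃)` times a sum of two products of one-variable factors, so
the sum factors: the sums over `k₂ ≥ k₁` and over `k₁` are geometric, those over `j₁, j₃` are
convergent `p`-series, and the integral test gives `∑_{j ≥ A} j^(-1-σ) ≤ (1 + σ⁻¹) A^(-σ)` for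
the sum over `j₂`, with `σ = δ₂₃ - θ` or `σ = θ`.
-/

open scoped ENNReal

namespace ENNReal

theorem rpow_mul_add_rpow_div_add_rpow_le {b : ℝ≥0∞} (hb₀ : b ≠ 0) (hb : b ≠ ⊤) {δ θ : ℝ}
    (hδ₀ : 0 ≤ δ) (hδ₁ : δ ≤ 1) (hθ : 0 ≤ θ) (P Q R S T : ℝ) :
    b ^ P * (b ^ Q + b ^ R) ^ δ / (b ^ S + b ^ T) ^ θ
      ≤ b ^ (P + Q * δ - T * θ) + b ^ (P + R * δ - S * θ) := by
  have hnum : (b ^ Q + b ^ R) ^ δ ≤ b ^ (Q * δ) + b ^ (R * δ) := by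
    simpa only [rpow_mul] using rpow_add_le_add_rpow _ _ hδ₀ hδ₁
  have hden {U : ℝ} (hU : (b ^ U) ^ θ ≤ (b ^ S + b ^ T) ^ θ) :
      ((b ^ S + b ^ T) ^ θ)⁻¹ ≤ b ^ (-(U * θ)) := by
    rw [rpow_neg, rpow_mul]
    exact ENNReal.inv_le_inv.2 hU
  calc b ^ P * (b ^ Q + b ^ R) ^ δ / (b ^ S + b ^ T) ^ θ
      ≤ b ^ P * b ^ (Q * δ) * ((b ^ S + b ^ T) ^ θ)⁻¹
        + b ^ P * b ^ (R * δ) * ((b ^ S + b ^ T) ^ θ)⁻¹ := by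
        grw [hnum, div_eq_mul_inv, mul_add, add_mul]
    _ ≤ b ^ P * b ^ (Q * δ) * b ^ (-(T * θ)) + b ^ P * b ^ (R * δ) * b ^ (-(S * θ)) := by
        gcongr
        · exact hden (by gcongr; exact le_add_self)
        · exact hden (by gcongr; exact le_self_add)
    _ = b ^ (P + Q * δ - T * θ) + b ^ (P + R * δ - S * θ) := by
        simp only [← rpow_add _ _ hb₀ hb, sub_eq_add_neg]

theorem natCast_eq_two_rpow_logb {n : ℕ} (hn : n ≠ 0) :
    (n : ℝ≥0∞) = 2 ^ Real.logb 2 n := by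
  rw [← ofReal_ofNat 2, ofReal_rpow_of_pos two_pos,
    Real.rpow_logb two_pos (by norm_num) (by positivity), ofReal_natCast]

theorem tsum_rpow_neg_mul_ne_top {b : ℝ≥0∞} (hb : 1 < b) {c : ℝ} (hc : 0 < c) :
    ∑' n : ℕ, b ^ (-(n : ℝ) * c) ≠ ⊤ := by
  have hpow (n : ℕ) : b ^ (-(n : ℝ) * c) = (b ^ (-c)) ^ n := by
    rw [← rpow_natCast, ← rpow_mul]
    ring_nf
  have hr : b ^ (-c) < 1 := rpow_lt_one_of_one_lt_of_neg hb (by linarith)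
  rw [tsum_congr hpow, tsum_geometric, ne_eq, inv_eq_top]
  exact (tsub_pos_of_lt hr).ne'

theorem tsum_ite_rpow_sub_mul (b : ℝ≥0∞) (c : ℝ) (k : ℕ) :
    ∑' k' : ℕ, (if k ≤ k' then b ^ (((k : ℝ) - k') * c) else 0) = ∑' n : ℕ, b ^ (-(n : ℝ) * c) := by
  rw [← (add_left_injective k).tsum_eq]
  · refine tsum_congr fun n => ?_
    rw [if_pos (Nat.le_add_left k n)]
    push_cast
    ring_nf
  · intro k' hk'
    have hkk' : k ≤ k' := by by_contra h; exact hk' (if_neg h)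
    exact ⟨k' - k, Nat.sub_add_cancel hkk'⟩

theorem tsum_mul_prod_le {F : ℕ → ℕ → ℝ≥0∞} {a b c d : ℕ → ℝ≥0∞} {G α β γ ε : ℝ≥0∞}
    (hF : ∀ k, ∑' k', F k k' ≤ G) (ha : ∑' k, a k ≤ α) (hb : ∑' i, b i ≤ β)
    (hc : ∑' j, c j ≤ γ) (hd : ∑' l, d l ≤ ε) :
    ∑' k, ∑' k', ∑' i, ∑' j, ∑' l, F k k' * (a k * b i * c j * d l) ≤ G * α * β * γ * ε := by
  simp only [← mul_assoc, ENNReal.tsum_mul_left, ENNReal.tsum_mul_right]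
  calc (∑' k, (∑' k', F k k') * a k) * (∑' i, b i) * (∑' j, c j) * (∑' l, d l)
      ≤ (∑' k, G * a k) * β * γ * ε := by gcongr with k; exact hF k
    _ ≤ G * α * β * γ * ε := by rw [ENNReal.tsum_mul_left]; gcongr

end ENNReal

theorem Real.summable_natCast_add_rpow_neg {σ : ℝ} (hσ : 0 < σ) (N : ℕ) :
    Summable fun n : ℕ => ((n + N : ℕ) : ℝ) ^ (-(1 + σ)) :=
  (Real.summable_nat_rpow.2 (by linarith)).comp_injective (add_left_injective N)

theorem Real.tsum_natCast_add_rpow_neg_le {σ : ℝ} (hσ : 0 < σ) {N : ℕ} (hN : N ≠ 0) :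
    ∑' n : ℕ, ((n + N : ℕ) : ℝ) ^ (-(1 + σ)) ≤ (1 + σ⁻¹) * (N : ℝ) ^ (-σ) := by
  have hN₀ : (0 : ℝ) < N := by positivity
  have hN₁ : (1 : ℝ) ≤ N := by exact_mod_cast Nat.one_le_iff_ne_zero.2 hN
  have hexp : -(1 + σ) < -1 := by linarith
  have hsum := Real.summable_natCast_add_rpow_neg hσ N
  have hint : ∑' n : ℕ, ((n + N + 1 : ℕ) : ℝ) ^ (-(1 + σ)) ≤ σ⁻¹ * (N : ℝ) ^ (-σ) := by
    refine (AntitoneOn.tsum_comp_add_le_integral N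
      ((Real.antitoneOn_rpow_Ioi_of_exponent_nonpos (by linarith)).mono
        fun x hx => hN₀.trans_le hx)
      (integrableOn_Ioi_rpow_of_lt hexp hN₀)
      fun t ht => Real.rpow_nonneg (hN₀.trans ht).le _).trans_eq ?_
    rw [integral_Ioi_rpow_of_lt hexp hN₀, show -(1 + σ) + 1 = -σ by ring, neg_div_neg_eq,
      div_eq_inv_mul]
  have hfirst : (N : ℝ) ^ (-(1 + σ)) ≤ (N : ℝ) ^ (-σ) :=
    Real.rpow_le_rpow_of_exponent_le hN₁ (by linarith)
  rw [hsum.tsum_eq_zero_add]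
  simp only [zero_add, add_right_comm _ 1 N] at hint ⊢
  linarith

noncomputable def powTail (A σ : ℝ) (j : ℕ) : ℝ≥0∞ :=
  if A ≤ j then (j : ℝ≥0∞) ^ (-(1 + σ)) else 0

theorem tsum_powTail_le {A σ : ℝ} (hA : 0 < A) (hσ : 0 < σ) :
    ∑' j, powTail A σ j ≤ ENNReal.ofReal (1 + σ⁻¹) * ENNReal.ofReal A ^ (-σ) := by
  set N := ⌈A⌉₊
  have hN : N ≠ 0 := (Nat.ceil_pos.2 hA).ne'
  have hshift : ∑' j, powTail A σ j = ∑' n : ℕ, ((n + N : ℕ) : ℝ≥0∞) ^ (-(1 + σ)) := by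
    rw [← (add_left_injective N).tsum_eq]
    · refine tsum_congr fun n => if_pos ?_
      exact (Nat.le_ceil A).trans (by exact_mod_cast Nat.le_add_left N n)
    · intro j hj
      have hAj : A ≤ j := by by_contra h; exact hj (if_neg h)
      exact ⟨j - N, Nat.sub_add_cancel (Nat.ceil_le.2 hAj)⟩
  have hreal (n : ℕ) : ((n + N : ℕ) : ℝ≥0∞) ^ (-(1 + σ))
      = ENNReal.ofReal (((n + N : ℕ) : ℝ) ^ (-(1 + σ))) := by
    rw [← ENNReal.ofReal_natCast, ENNReal.ofReal_rpow_of_pos (by positivity)]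
  rw [hshift, tsum_congr hreal, ← ENNReal.ofReal_tsum_of_nonneg (fun n => by positivity)
    (Real.summable_natCast_add_rpow_neg hσ N),
    ENNReal.ofReal_rpow_of_pos hA, ← ENNReal.ofReal_mul (by positivity)]
  refine ENNReal.ofReal_le_ofReal ((Real.tsum_natCast_add_rpow_neg_le hσ hN).trans ?_)
  exact mul_le_mul_of_nonneg_left (Real.rpow_le_rpow_of_nonpos hA (Nat.le_ceil A) (by linarith))
    (by positivity)

theorem tsum_powTail_le_of_le {A σ τ : ℝ} (hA : 1 ≤ A) (hσ : 0 < σ) (hτ : τ ≤ σ) :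
    ∑' j, powTail A σ j ≤ ENNReal.ofReal (1 + σ⁻¹) * ENNReal.ofReal A ^ (-τ) :=
  (tsum_powTail_le (by linarith) hσ).trans <| by
    gcongr
    exact ENNReal.one_le_ofReal.2 hA

open ENNReal in
theorem summand_le_of_ne_zero {δ₁ δ₂₃ θ : ℝ} (hδ₂₃ : 0 < δ₂₃) (hδ₂₃' : δ₂₃ ≤ 1) (hθ : 0 ≤ θ)
    (k₁ k₂ : ℕ) {j₁ j₂ j₃ : ℕ} (h₁ : j₁ ≠ 0) (h₂ : j₂ ≠ 0) (h₃ : j₃ ≠ 0) :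
    (2 : ℝ≥0∞) ^ (-(k₁ : ℝ) * δ₁) * ((j₁ : ℝ≥0∞)) ^ (-(1 + δ₁)) *
        ((j₂ : ℝ≥0∞))⁻¹ * ((j₃ : ℝ≥0∞))⁻¹ *
        ((2 : ℝ≥0∞) ^ (-(k₂ : ℝ)) * ((j₂ : ℝ≥0∞))⁻¹ +
            (2 : ℝ≥0∞) ^ ((k₁ : ℝ) - (k₂ : ℝ)) * ((j₃ : ℝ≥0∞))⁻¹) ^ δ₂₃ /
        ((2 : ℝ≥0∞) ^ ((k₁ : ℝ)) * (j₁ : ℝ≥0∞) * (j₂ : ℝ≥0∞) * ((j₃ : ℝ≥0∞))⁻¹ +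
            (2 : ℝ≥0∞) ^ (-(k₁ : ℝ)) * ((j₁ : ℝ≥0∞))⁻¹ * ((j₂ : ℝ≥0∞))⁻¹ *
              (j₃ : ℝ≥0∞)) ^ θ
      ≤ 2 ^ (((k₁ : ℝ) - k₂) * δ₂₃) *
          (2 ^ (-(k₁ : ℝ) * (δ₁ - θ)) * (j₁ : ℝ≥0∞) ^ (-(1 + (δ₁ - θ))) *
              (j₂ : ℝ≥0∞) ^ (-(1 + (δ₂₃ - θ))) * (j₃ : ℝ≥0∞) ^ (-(1 + θ))
            + 2 ^ (-(k₁ : ℝ) * (δ₁ + θ)) * (j₁ : ℝ≥0∞) ^ (-(1 + (δ₁ + θ))) *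
              (j₂ : ℝ≥0∞) ^ (-(1 + θ)) * (j₃ : ℝ≥0∞) ^ (-(1 + (δ₂₃ - θ)))) := by
  rw [natCast_eq_two_rpow_logb h₁, natCast_eq_two_rpow_logb h₂, natCast_eq_two_rpow_logb h₃]
  simp only [← rpow_neg, ← rpow_mul, mul_add, ← rpow_add _ _ two_ne_zero ofNat_ne_top]
  refine (rpow_mul_add_rpow_div_add_rpow_le two_ne_zero ofNat_ne_top hδ₂₃.le hδ₂₃' hθ
    _ _ _ _ _).trans ?_
  have hk₁ : 0 ≤ (k₁ : ℝ) * δ₂₃ := by positivity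
  gcongr <;> first | exact one_le_two | linarith

theorem summand_le {δ₁ δ₂₃ θ A : ℝ} (hδ₂₃ : 0 < δ₂₃) (hδ₂₃' : δ₂₃ ≤ 1) (hθ : 0 ≤ θ)
    (k₁ k₂ j₁ j₂ j₃ : ℕ) :
    (if k₁ ≤ k₂ ∧ 1 ≤ j₁ ∧ 1 ≤ j₂ ∧ 1 ≤ j₃ ∧ A ≤ (j₂ : ℝ) then
        (2 : ℝ≥0∞) ^ (-(k₁ : ℝ) * δ₁) * ((j₁ : ℝ≥0∞)) ^ (-(1 + δ₁)) *
          ((j₂ : ℝ≥0∞))⁻¹ * ((j₃ : ℝ≥0∞))⁻¹ *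
          ((2 : ℝ≥0∞) ^ (-(k₂ : ℝ)) * ((j₂ : ℝ≥0∞))⁻¹ +
              (2 : ℝ≥0∞) ^ ((k₁ : ℝ) - (k₂ : ℝ)) * ((j₃ : ℝ≥0∞))⁻¹) ^ δ₂₃ /
          ((2 : ℝ≥0∞) ^ ((k₁ : ℝ)) * (j₁ : ℝ≥0∞) * (j₂ : ℝ≥0∞) * ((j₃ : ℝ≥0∞))⁻¹ +
              (2 : ℝ≥0∞) ^ (-(k₁ : ℝ)) * ((j₁ : ℝ≥0∞))⁻¹ * ((j₂ : ℝ≥0∞))⁻¹ *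
                (j₃ : ℝ≥0∞)) ^ θ
      else 0)
      ≤ (if k₁ ≤ k₂ then (2 : ℝ≥0∞) ^ (((k₁ : ℝ) - k₂) * δ₂₃) else 0) *
          (2 ^ (-(k₁ : ℝ) * (δ₁ - θ)) * powTail 1 (δ₁ - θ) j₁ * powTail A (δ₂₃ - θ) j₂ *
              powTail 1 θ j₃
            + 2 ^ (-(k₁ : ℝ) * (δ₁ + θ)) * powTail 1 (δ₁ + θ) j₁ * powTail A θ j₂ *
              powTail 1 (δ₂₃ - θ) j₃) := by
  by_cases hc : k₁ ≤ k₂ ∧ 1 ≤ j₁ ∧ 1 ≤ j₂ ∧ 1 ≤ j₃ ∧ A ≤ (j₂ : ℝ)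
  · obtain ⟨hk, h₁, h₂, h₃, hA⟩ := hc
    simp only [powTail, hk, h₁, h₂, h₃, hA, Nat.one_le_cast.2 h₁, Nat.one_le_cast.2 h₃, and_self,
      if_true]
    exact summand_le_of_ne_zero hδ₂₃ hδ₂₃' hθ k₁ k₂ (Nat.one_le_iff_ne_zero.1 h₁)
      (Nat.one_le_iff_ne_zero.1 h₂) (Nat.one_le_iff_ne_zero.1 h₃)
  · rw [if_neg hc]
    exact zero_le

theorem stmt3_general (δ₁ δ₂₃ θ : ℝ) (hδ₂₃ : δ₂₃ ∈ Set.Ioc (0:ℝ) 1)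
    (hθ : 0 < θ) (hθ' : θ < min δ₁ δ₂₃) :
    ∃ C : ℝ≥0∞, C ≠ ⊤ ∧ ∀ (A : ℝ), 1 ≤ A →
      (∑' k₁ : ℕ, ∑' k₂ : ℕ, ∑' j₁ : ℕ, ∑' j₂ : ℕ, ∑' j₃ : ℕ,
          if k₁ ≤ k₂ ∧ 1 ≤ j₁ ∧ 1 ≤ j₂ ∧ 1 ≤ j₃ ∧ A ≤ (j₂ : ℝ) then
            (2 : ℝ≥0∞) ^ (-(k₁ : ℝ) * δ₁) * ((j₁ : ℝ≥0∞)) ^ (-(1 + δ₁)) *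
              ((j₂ : ℝ≥0∞))⁻¹ * ((j₃ : ℝ≥0∞))⁻¹ *
              ((2 : ℝ≥0∞) ^ (-(k₂ : ℝ)) * ((j₂ : ℝ≥0∞))⁻¹ +
                  (2 : ℝ≥0∞) ^ ((k₁ : ℝ) - (k₂ : ℝ)) * ((j₃ : ℝ≥0∞))⁻¹) ^ δ₂₃ /
              ((2 : ℝ≥0∞) ^ ((k₁ : ℝ)) * (j₁ : ℝ≥0∞) * (j₂ : ℝ≥0∞) * ((j₃ : ℝ≥0∞))⁻¹ +
                  (2 : ℝ≥0∞) ^ (-(k₁ : ℝ)) * ((j₁ : ℝ≥0∞))⁻¹ * ((j₂ : ℝ≥0∞))⁻¹ *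
                    (j₃ : ℝ≥0∞)) ^ θ
          else 0)
        ≤ C * (ENNReal.ofReal A) ^ (-(min θ (min (δ₁ - θ) (δ₂₃ - θ)))) := by
  obtain ⟨hδ₂₃₀, hδ₂₃₁⟩ := hδ₂₃
  have hθδ₁ : 0 < δ₁ - θ := sub_pos.2 (hθ'.trans_le (min_le_left _ _))
  have hθδ₂₃ : 0 < δ₂₃ - θ := sub_pos.2 (hθ'.trans_le (min_le_right _ _))
  set δ₀ := min θ (min (δ₁ - θ) (δ₂₃ - θ))
  let S (σ : ℝ) : ℝ≥0∞ := ∑' n : ℕ, 2 ^ (-(n : ℝ) * σ)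
  let c (σ : ℝ) : ℝ≥0∞ := ENNReal.ofReal (1 + σ⁻¹)
  have hS {σ : ℝ} (hσ : 0 < σ) : S σ ≠ ⊤ := ENNReal.tsum_rpow_neg_mul_ne_top (by norm_num) hσ
  refine ⟨S δ₂₃ * S (δ₁ - θ) * c (δ₁ - θ) * c (δ₂₃ - θ) * c θ
    + S δ₂₃ * S (δ₁ + θ) * c (δ₁ + θ) * c θ * c (δ₂₃ - θ), ?_, fun A hA => ?_⟩
  · have := hS hδ₂₃₀
    have := hS hθδ₁
    have := hS (show 0 < δ₁ + θ by linarith)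
    finiteness
  have tail_one {σ : ℝ} (hσ : 0 < σ) : ∑' j, powTail 1 σ j ≤ c σ := by
    simpa using tsum_powTail_le one_pos hσ
  have geo (k : ℕ) := (ENNReal.tsum_ite_rpow_sub_mul 2 δ₂₃ k).le
  calc _ ≤ _ := ENNReal.tsum_le_tsum fun k₁ => ENNReal.tsum_le_tsum fun k₂ =>
        ENNReal.tsum_le_tsum fun j₁ => ENNReal.tsum_le_tsum fun j₂ =>
        ENNReal.tsum_le_tsum fun j₃ => summand_le hδ₂₃₀ hδ₂₃₁ hθ.le k₁ k₂ j₁ j₂ j₃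
    _ = _ := by simp only [mul_add, ENNReal.tsum_add]
    _ ≤ S δ₂₃ * S (δ₁ - θ) * c (δ₁ - θ) * (c (δ₂₃ - θ) * ENNReal.ofReal A ^ (-δ₀)) * c θ
        + S δ₂₃ * S (δ₁ + θ) * c (δ₁ + θ) * (c θ * ENNReal.ofReal A ^ (-δ₀)) * c (δ₂₃ - θ) :=
      add_le_add
        (ENNReal.tsum_mul_prod_le geo le_rfl (tail_one hθδ₁)
          (tsum_powTail_le_of_le hA hθδ₂₃ ((min_le_right _ _).trans (min_le_right _ _)))
          (tail_one hθ))
        (ENNReal.tsum_mul_prod_le geo le_rfl (tail_one (by linarith))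
          (tsum_powTail_le_of_le hA hθ (min_le_left _ _)) (tail_one hθδ₂₃))
    _ = _ := by ring

/-- The summability estimate 𝒥₂(A) ≲ A^{-δ₀}: condition j₂ ≥ A (Lemma 3.1, (JJA-2)):
sum over `k₂ ≥ k₁ ≥ 0` and `j₁, j₂, j₃ ≥ 1` of
`2^{-k₁δ₁} j₁^{-1-δ₁} j₂⁻¹ j₃⁻¹ (2^{-k₂}j₂⁻¹ + 2^{k₁-k₂}j₃⁻¹)^{δ₂₃} /
(2^{k₁} j₁ j₂ j₃⁻¹ + 2^{-k₁} j₁⁻¹ j₂⁻¹ j₃)^θ`. -/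
theorem stmt3 (δ₁ δ₂₃ θ : ℝ) (hδ₁ : δ₁ ∈ Set.Ioc (0:ℝ) 1) (hδ₂₃ : δ₂₃ ∈ Set.Ioc (0:ℝ) 1)
    (hθ : 0 < θ) (hθ' : θ < min δ₁ δ₂₃) :
    ∃ C : ℝ≥0∞, C ≠ ⊤ ∧ ∀ (A : ℝ), 1 ≤ A →
      (∑' k₁ : ℕ, ∑' k₂ : ℕ, ∑' j₁ : ℕ, ∑' j₂ : ℕ, ∑' j₃ : ℕ,
          if k₁ ≤ k₂ ∧ 1 ≤ j₁ ∧ 1 ≤ j₂ ∧ 1 ≤ j₃ ∧ A ≤ (j₂ : ℝ) then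
            (2 : ℝ≥0∞) ^ (-(k₁ : ℝ) * δ₁) * ((j₁ : ℝ≥0∞)) ^ (-(1 + δ₁)) *
              ((j₂ : ℝ≥0∞))⁻¹ * ((j₃ : ℝ≥0∞))⁻¹ *
              ((2 : ℝ≥0∞) ^ (-(k₂ : ℝ)) * ((j₂ : ℝ≥0∞))⁻¹ +
                  (2 : ℝ≥0∞) ^ ((k₁ : ℝ) - (k₂ : ℝ)) * ((j₃ : ℝ≥0∞))⁻¹) ^ δ₂₃ /
              ((2 : ℝ≥0∞) ^ ((k₁ : ℝ)) * (j₁ : ℝ≥0∞) * (j₂ : ℝ≥0∞) * ((j₃ : ℝ≥0∞))⁻¹ +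
                  (2 : ℝ≥0∞) ^ (-(k₁ : ℝ)) * ((j₁ : ℝ≥0∞))⁻¹ * ((j₂ : ℝ≥0∞))⁻¹ *
                    (j₃ : ℝ≥0∞)) ^ θ
          else 0)
        ≤ C * (ENNReal.ofReal A) ^ (-(min θ (min (δ₁ - θ) (δ₂₃ - θ)))) :=
  stmt3_general δ₁ δ₂₃ θ hδ₂₃ hθ hθ'
end

section
/- Let δ₁, δ_{2,3} ∈ (0,1], 0 < θ < min{δ₁, δ_{2,3}}, and set δ₀ := min{θ, δ₁ - θ, δ_{2,3} - θ}. Then for every real A ≥ 1, the sum over integers k₂ ≥ k₁ ≥ 0 and integers j₁, j₂, j₃ ≥ 1 with j₃ ≥ A of 2^{-k₁δ₁} · j₁^{-1-δ₁} · j₂^{-1} · j₃^{-1} · (2^{-k₂} j₂^{-1} + 2^{k₁-k₂} j₃^{-1})^{δ_{2,3}} / (2^{k₁} j₁ j₂ j₃^{-1} + 2^{-k₁} j₁^{-1} j₂^{-1} j₃)^{θ} is bounded by a constant (depending only on δ₁, δ_{2,3}, θ) times A^{-δ₀}. -/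
open scoped ENNReal

/-!
Since `k₁ ≥ 0` and `δ₂₃ ≤ 1`, the factor `(2^{-k₂} j₂⁻¹ + 2^{k₁-k₂} j₃⁻¹)^{δ₂₃}` is at most
`2^{(k₁-k₂)δ₂₃} (j₂^{-δ₂₃} + j₃^{-δ₂₃})`. Bounding the denominator below by its second summand
in the first half and by its first summand in the second, each half of the summand becomes a
product `2^{-k₁ c} 2^{-(k₂-k₁)δ₂₃} j₁^{-1-ε₁} j₂^{-1-ε₂} j₃^{-1-ε₃}` with all exponents positive:
`(c, ε₁, ε₂, ε₃) = (δ₁ - θ, δ₁ - θ, δ₂₃ - θ, θ)` or `(δ₁ + θ, δ₁ + θ, θ, δ₂₃ - θ)`. The sum then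
factorises into geometric series, convergent `p`-series, and a tail
`∑_{n ≥ A} n^{-1-ε₃} ≲ A^{-ε₃}` given by the integral test.
-/

theorem Real.tsum_nat_add_rpow_neg_le {ε : ℝ} (hε : 0 < ε) {N : ℕ} (hN : N ≠ 0) :
    ∑' n : ℕ, ((n + N : ℕ) : ℝ) ^ (-(1 + ε)) ≤ (1 + 1 / ε) * (N : ℝ) ^ (-ε) := by
  have hN0 : (0 : ℝ) < N := by positivity
  have hexp : -(1 + ε) < -1 := by linarith
  have anti : AntitoneOn (fun x : ℝ ↦ x ^ (-(1 + ε))) (Set.Ici (N : ℝ)) := fun x hx y _ hxy ↦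
    Real.rpow_le_rpow_of_nonpos (hN0.trans_le hx) hxy (by linarith)
  have tail : ∑' n : ℕ, ((n + N + 1 : ℕ) : ℝ) ^ (-(1 + ε)) ≤ (N : ℝ) ^ (-ε) / ε := by
    convert anti.tsum_comp_add_le_integral N (integrableOn_Ioi_rpow_of_lt hexp hN0)
      (fun t ht ↦ Real.rpow_nonneg (hN0.le.trans ht.out.le) _) using 1
    rw [integral_Ioi_rpow_of_lt hexp hN0]
    ring_nf
  have head : (N : ℝ) ^ (-(1 + ε)) ≤ (N : ℝ) ^ (-ε) :=
    Real.rpow_le_rpow_of_exponent_le (mod_cast Nat.one_le_iff_ne_zero.mpr hN) (by linarith)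
  have summable : Summable fun n : ℕ ↦ ((n + N : ℕ) : ℝ) ^ (-(1 + ε)) :=
    (summable_nat_add_iff N).mpr (Real.summable_nat_rpow.mpr hexp)
  rw [summable.tsum_eq_zero_add]
  simp only [zero_add, add_right_comm _ N 1] at tail ⊢
  calc _ ≤ (N : ℝ) ^ (-ε) + (N : ℝ) ^ (-ε) / ε := add_le_add head tail
    _ = _ := by ring

noncomputable def tailTerm (ε A : ℝ) (n : ℕ) : ℝ≥0∞ :=
  if A ≤ n then (n : ℝ≥0∞) ^ (-(1 + ε)) else 0

theorem tsum_tailTerm_le {ε A : ℝ} (hε : 0 < ε) (hA : 0 < A) :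
    ∑' n, tailTerm ε A n ≤ ENNReal.ofReal (1 + 1 / ε) * ENNReal.ofReal A ^ (-ε) := by
  set N := ⌈A⌉₊
  have hN : N ≠ 0 := (Nat.ceil_pos.mpr hA).ne'
  have shift : ∑' n, tailTerm ε A n = ∑' n, tailTerm ε A (n + N) := by
    rw [← ENNReal.summable.sum_add_tsum_nat_add', Finset.sum_eq_zero, zero_add]
    intro n hn
    exact if_neg (not_le.mpr (Nat.lt_ceil.mp (Finset.mem_range.mp hn)))
  have ofReal_eq (n : ℕ) :
      tailTerm ε A (n + N) = ENNReal.ofReal (((n + N : ℕ) : ℝ) ^ (-(1 + ε))) := by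
    rw [tailTerm, if_pos (Nat.ceil_le.mp (by omega)), ← ENNReal.ofReal_natCast,
      ENNReal.ofReal_rpow_of_pos (by positivity)]
  have hNA : (N : ℝ) ^ (-ε) ≤ A ^ (-ε) :=
    Real.rpow_le_rpow_of_nonpos hA (Nat.le_ceil A) (by linarith)
  rw [shift, tsum_congr ofReal_eq, ← ENNReal.ofReal_tsum_of_nonneg (fun _ ↦ by positivity)
    ((summable_nat_add_iff N).mpr (Real.summable_nat_rpow.mpr (by linarith))),
    ENNReal.ofReal_rpow_of_pos hA, ← ENNReal.ofReal_mul (by positivity)]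
  exact ENNReal.ofReal_le_ofReal <| (Real.tsum_nat_add_rpow_neg_le hε hN).trans <|
    mul_le_mul_of_nonneg_left hNA (by positivity)

theorem tsum_tailTerm_one_ne_top {ε : ℝ} (hε : 0 < ε) : ∑' n, tailTerm ε 1 n ≠ ⊤ :=
  ne_top_of_le_ne_top (by simp) (tsum_tailTerm_le hε one_pos)

theorem tsum_two_rpow_neg_mul_ne_top {c : ℝ} (hc : 0 < c) :
    ∑' k : ℕ, (2 : ℝ≥0∞) ^ (-(k : ℝ) * c) ≠ ⊤ := by
  have hpow (k : ℕ) : (2 : ℝ≥0∞) ^ (-(k : ℝ) * c) = (2 ^ (-c)) ^ k := by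
    rw [← ENNReal.rpow_natCast, ← ENNReal.rpow_mul, neg_mul, neg_mul, mul_comm]
  have hr : (2 : ℝ≥0∞) ^ (-c) < 1 :=
    ENNReal.rpow_lt_one_of_one_lt_of_neg (by norm_num) (by linarith)
  rw [tsum_congr hpow, ENNReal.tsum_geometric, ENNReal.inv_ne_top]
  exact (tsub_pos_of_lt hr).ne'

theorem tsum_ite_two_rpow_sub_mul_eq (k₁ : ℕ) (d : ℝ) :
    ∑' k₂ : ℕ, (if k₁ ≤ k₂ then (2 : ℝ≥0∞) ^ (((k₁ : ℝ) - k₂) * d) else 0) =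
      ∑' m : ℕ, (2 : ℝ≥0∞) ^ (-(m : ℝ) * d) := by
  rw [← ENNReal.summable.sum_add_tsum_nat_add' (k := k₁), Finset.sum_eq_zero, zero_add]
  · refine tsum_congr fun m ↦ ?_
    rw [if_pos (Nat.le_add_left k₁ m)]
    push_cast
    congr 1
    ring
  · intro k hk
    exact if_neg (not_le.mpr (Finset.mem_range.mp hk))

theorem tsum_two_rpow_mul_ite_mul_eq (c d : ℝ) (u v w : ℕ → ℝ≥0∞) :
    ∑' (k₁ : ℕ) (k₂ : ℕ) (j₁ : ℕ) (j₂ : ℕ) (j₃ : ℕ), (2 : ℝ≥0∞) ^ (-(k₁ : ℝ) * c) *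
        (if k₁ ≤ k₂ then (2 : ℝ≥0∞) ^ (((k₁ : ℝ) - k₂) * d) else 0) * (u j₁ * v j₂ * w j₃) =
      (∑' k : ℕ, (2 : ℝ≥0∞) ^ (-(k : ℝ) * c)) * (∑' k : ℕ, (2 : ℝ≥0∞) ^ (-(k : ℝ) * d)) *
        ((∑' n, u n) * (∑' n, v n) * ∑' n, w n) := by
  simp only [ENNReal.tsum_mul_left, ENNReal.tsum_mul_right, tsum_ite_two_rpow_sub_mul_eq]

theorem ENNReal.mul_add_rpow_div_add_rpow_le {δ θ : ℝ} (hδ₀ : 0 ≤ δ) (hδ₁ : δ ≤ 1) (hθ : 0 ≤ θ)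
    (c x₁ x₂ y₁ y₂ : ℝ≥0∞) :
    c * (x₁ + x₂) ^ δ / (y₁ + y₂) ^ θ ≤ c * x₁ ^ δ * y₂ ^ (-θ) + c * x₂ ^ δ * y₁ ^ (-θ) := by
  have h₁ : (y₁ + y₂) ^ θ ≥ y₂ ^ θ := by gcongr; exact le_add_self
  have h₂ : (y₁ + y₂) ^ θ ≥ y₁ ^ θ := by gcongr; exact le_self_add
  calc c * (x₁ + x₂) ^ δ / (y₁ + y₂) ^ θ
      ≤ c * (x₁ ^ δ + x₂ ^ δ) / (y₁ + y₂) ^ θ := by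
        gcongr; exact ENNReal.rpow_add_le_add_rpow _ _ hδ₀ hδ₁
    _ = c * x₁ ^ δ / (y₁ + y₂) ^ θ + c * x₂ ^ δ / (y₁ + y₂) ^ θ := by
        rw [mul_add, ENNReal.add_div]
    _ ≤ c * x₁ ^ δ / y₂ ^ θ + c * x₂ ^ δ / y₁ ^ θ := by gcongr
    _ = _ := by simp only [div_eq_mul_inv, ENNReal.rpow_neg]

theorem ENNReal.natCast_eq_two_rpow_logb_s4 {n : ℕ} (hn : n ≠ 0) :
    (n : ℝ≥0∞) = 2 ^ Real.logb 2 n := by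
  rw [← ENNReal.ofReal_ofNat, ENNReal.ofReal_rpow_of_pos two_pos,
    Real.rpow_logb two_pos (by norm_num) (by positivity), ENNReal.ofReal_natCast]

theorem ENNReal.two_rpow_mul_two_rpow (x y : ℝ) : (2 : ℝ≥0∞) ^ x * 2 ^ y = 2 ^ (x + y) :=
  (ENNReal.rpow_add x y two_ne_zero ENNReal.ofNat_ne_top).symm

noncomputable def j3Term (δ₁ δ₂₃ θ : ℝ) (k₁ k₂ j₁ j₂ j₃ : ℕ) : ℝ≥0∞ :=
  (2 : ℝ≥0∞) ^ (-(k₁ : ℝ) * δ₁) * ((j₁ : ℝ≥0∞)) ^ (-(1 + δ₁)) *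
    ((j₂ : ℝ≥0∞))⁻¹ * ((j₃ : ℝ≥0∞))⁻¹ *
    ((2 : ℝ≥0∞) ^ (-(k₂ : ℝ)) * ((j₂ : ℝ≥0∞))⁻¹ +
        (2 : ℝ≥0∞) ^ ((k₁ : ℝ) - (k₂ : ℝ)) * ((j₃ : ℝ≥0∞))⁻¹) ^ δ₂₃ /
    ((2 : ℝ≥0∞) ^ ((k₁ : ℝ)) * (j₁ : ℝ≥0∞) * (j₂ : ℝ≥0∞) * ((j₃ : ℝ≥0∞))⁻¹ +
        (2 : ℝ≥0∞) ^ (-(k₁ : ℝ)) * ((j₁ : ℝ≥0∞))⁻¹ * ((j₂ : ℝ≥0∞))⁻¹ * (j₃ : ℝ≥0∞)) ^ θ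

theorem j3Term_le {δ₁ δ₂₃ θ : ℝ} (hδ₂₃ : 0 ≤ δ₂₃) (hδ₂₃₁ : δ₂₃ ≤ 1) (hθ : 0 ≤ θ) (k₁ k₂ : ℕ)
    {j₁ j₂ j₃ : ℕ} (h₁ : j₁ ≠ 0) (h₂ : j₂ ≠ 0) (h₃ : j₃ ≠ 0) :
    j3Term δ₁ δ₂₃ θ k₁ k₂ j₁ j₂ j₃ ≤
      2 ^ (-(k₁ : ℝ) * (δ₁ - θ)) * 2 ^ (((k₁ : ℝ) - k₂) * δ₂₃) *
          ((j₁ : ℝ≥0∞) ^ (-(1 + (δ₁ - θ))) * (j₂ : ℝ≥0∞) ^ (-(1 + (δ₂₃ - θ))) *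
            (j₃ : ℝ≥0∞) ^ (-(1 + θ))) +
        2 ^ (-(k₁ : ℝ) * (δ₁ + θ)) * 2 ^ (((k₁ : ℝ) - k₂) * δ₂₃) *
          ((j₁ : ℝ≥0∞) ^ (-(1 + (δ₁ + θ))) * (j₂ : ℝ≥0∞) ^ (-(1 + θ)) *
            (j₃ : ℝ≥0∞) ^ (-(1 + (δ₂₃ - θ)))) := by
  unfold j3Term
  rw [ENNReal.natCast_eq_two_rpow_logb_s4 h₁, ENNReal.natCast_eq_two_rpow_logb_s4 h₂,
    ENNReal.natCast_eq_two_rpow_logb_s4 h₃]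
  -- with `jᵢ = 2 ^ xᵢ`, every monomial below collapses to a single power of `2`
  generalize Real.logb 2 j₁ = x₁, Real.logb 2 j₂ = x₂, Real.logb 2 j₃ = x₃
  have hk : (2 : ℝ≥0∞) ^ (-(k₂ : ℝ)) ≤ 2 ^ ((k₁ : ℝ) - k₂) :=
    ENNReal.rpow_le_rpow_of_exponent_le one_le_two (by linarith [k₁.cast_nonneg (α := ℝ)])
  grw [hk, ENNReal.mul_add_rpow_div_add_rpow_le hδ₂₃ hδ₂₃₁ hθ]
  simp only [← ENNReal.rpow_mul, ← ENNReal.rpow_neg, ENNReal.two_rpow_mul_two_rpow]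
  apply le_of_eq
  congr 2 <;> ring

theorem ite_j3Term_le {δ₁ δ₂₃ θ A : ℝ} (hδ₂₃ : 0 ≤ δ₂₃) (hδ₂₃₁ : δ₂₃ ≤ 1) (hθ : 0 ≤ θ)
    (k₁ k₂ j₁ j₂ j₃ : ℕ) :
    (if k₁ ≤ k₂ ∧ 1 ≤ j₁ ∧ 1 ≤ j₂ ∧ 1 ≤ j₃ ∧ A ≤ (j₃ : ℝ) then j3Term δ₁ δ₂₃ θ k₁ k₂ j₁ j₂ j₃
      else 0) ≤
      2 ^ (-(k₁ : ℝ) * (δ₁ - θ)) * (if k₁ ≤ k₂ then 2 ^ (((k₁ : ℝ) - k₂) * δ₂₃) else 0) *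
          (tailTerm (δ₁ - θ) 1 j₁ * tailTerm (δ₂₃ - θ) 1 j₂ * tailTerm θ A j₃) +
        2 ^ (-(k₁ : ℝ) * (δ₁ + θ)) * (if k₁ ≤ k₂ then 2 ^ (((k₁ : ℝ) - k₂) * δ₂₃) else 0) *
          (tailTerm (δ₁ + θ) 1 j₁ * tailTerm θ 1 j₂ * tailTerm (δ₂₃ - θ) A j₃) := by
  by_cases h : k₁ ≤ k₂ ∧ 1 ≤ j₁ ∧ 1 ≤ j₂ ∧ 1 ≤ j₃ ∧ A ≤ (j₃ : ℝ)
  · rw [if_pos h]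
    obtain ⟨hk, h₁, h₂, h₃, hA⟩ := h
    simp only [tailTerm, if_pos hk, if_pos hA, Nat.one_le_cast.mpr h₁, Nat.one_le_cast.mpr h₂,
      if_true]
    exact j3Term_le hδ₂₃ hδ₂₃₁ hθ k₁ k₂ (Nat.one_le_iff_ne_zero.mp h₁)
      (Nat.one_le_iff_ne_zero.mp h₂) (Nat.one_le_iff_ne_zero.mp h₃)
  · rw [if_neg h]
    exact bot_le

theorem stmt4_general (δ₁ δ₂₃ θ : ℝ) (hδ₂₃ : δ₂₃ ∈ Set.Ioc (0:ℝ) 1)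
    (hθ : 0 < θ) (hθ' : θ < min δ₁ δ₂₃) :
    ∃ C : ℝ≥0∞, C ≠ ⊤ ∧ ∀ (A : ℝ), 1 ≤ A →
      (∑' k₁ : ℕ, ∑' k₂ : ℕ, ∑' j₁ : ℕ, ∑' j₂ : ℕ, ∑' j₃ : ℕ,
          if k₁ ≤ k₂ ∧ 1 ≤ j₁ ∧ 1 ≤ j₂ ∧ 1 ≤ j₃ ∧ A ≤ (j₃ : ℝ) then
            (2 : ℝ≥0∞) ^ (-(k₁ : ℝ) * δ₁) * ((j₁ : ℝ≥0∞)) ^ (-(1 + δ₁)) *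
              ((j₂ : ℝ≥0∞))⁻¹ * ((j₃ : ℝ≥0∞))⁻¹ *
              ((2 : ℝ≥0∞) ^ (-(k₂ : ℝ)) * ((j₂ : ℝ≥0∞))⁻¹ +
                  (2 : ℝ≥0∞) ^ ((k₁ : ℝ) - (k₂ : ℝ)) * ((j₃ : ℝ≥0∞))⁻¹) ^ δ₂₃ /
              ((2 : ℝ≥0∞) ^ ((k₁ : ℝ)) * (j₁ : ℝ≥0∞) * (j₂ : ℝ≥0∞) * ((j₃ : ℝ≥0∞))⁻¹ +
                  (2 : ℝ≥0∞) ^ (-(k₁ : ℝ)) * ((j₁ : ℝ≥0∞))⁻¹ * ((j₂ : ℝ≥0∞))⁻¹ *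
                    (j₃ : ℝ≥0∞)) ^ θ
          else 0)
        ≤ C * (ENNReal.ofReal A) ^ (-(min θ (min (δ₁ - θ) (δ₂₃ - θ)))) := by
  obtain ⟨hθδ₁, hθδ₂₃⟩ := lt_min_iff.mp hθ'
  set δ₀ := min θ (min (δ₁ - θ) (δ₂₃ - θ))
  have hδ₀θ : δ₀ ≤ θ := min_le_left _ _
  have hδ₀δ₂₃ : δ₀ ≤ δ₂₃ - θ := (min_le_right _ _).trans (min_le_right _ _)
  set G : ℝ → ℝ≥0∞ := fun c ↦ ∑' k : ℕ, (2 : ℝ≥0∞) ^ (-(k : ℝ) * c)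
  set S : ℝ → ℝ≥0∞ := fun ε ↦ ∑' n, tailTerm ε 1 n
  set K₁ := G (δ₁ - θ) * G δ₂₃ * (S (δ₁ - θ) * S (δ₂₃ - θ) * ENNReal.ofReal (1 + 1 / θ))
  set K₂ := G (δ₁ + θ) * G δ₂₃ * (S (δ₁ + θ) * S θ * ENNReal.ofReal (1 + 1 / (δ₂₃ - θ)))
  refine ⟨K₁ + K₂, ?_, fun A hA ↦ ?_⟩
  · have := tsum_two_rpow_neg_mul_ne_top (sub_pos.mpr hθδ₁)
    have := tsum_two_rpow_neg_mul_ne_top (add_pos (hθ.trans hθδ₁) hθ)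
    have := tsum_two_rpow_neg_mul_ne_top hδ₂₃.1
    have := tsum_tailTerm_one_ne_top (sub_pos.mpr hθδ₁)
    have := tsum_tailTerm_one_ne_top (add_pos (hθ.trans hθδ₁) hθ)
    have := tsum_tailTerm_one_ne_top (sub_pos.mpr hθδ₂₃)
    have := tsum_tailTerm_one_ne_top hθ
    finiteness
  have tail {ε : ℝ} (hε : 0 < ε) (hδ₀ : δ₀ ≤ ε) :
      ∑' n, tailTerm ε A n ≤ ENNReal.ofReal (1 + 1 / ε) * ENNReal.ofReal A ^ (-δ₀) :=
    (tsum_tailTerm_le hε (by linarith)).trans <| by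
      gcongr
      exact ENNReal.one_le_ofReal.mpr hA
  calc _ ≤ _ := ENNReal.tsum_le_tsum fun k₁ ↦ ENNReal.tsum_le_tsum fun k₂ ↦
        ENNReal.tsum_le_tsum fun j₁ ↦ ENNReal.tsum_le_tsum fun j₂ ↦
        ENNReal.tsum_le_tsum fun j₃ ↦
        ite_j3Term_le (A := A) hδ₂₃.1.le hδ₂₃.2 hθ.le k₁ k₂ j₁ j₂ j₃
    _ = G (δ₁ - θ) * G δ₂₃ * (S (δ₁ - θ) * S (δ₂₃ - θ) * ∑' n, tailTerm θ A n) +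
        G (δ₁ + θ) * G δ₂₃ * (S (δ₁ + θ) * S θ * ∑' n, tailTerm (δ₂₃ - θ) A n) := by
      simp only [ENNReal.tsum_add, tsum_two_rpow_mul_ite_mul_eq]
      rfl
    _ ≤ _ := by
      grw [tail hθ hδ₀θ, tail (sub_pos.mpr hθδ₂₃) hδ₀δ₂₃]
      apply le_of_eq
      ring

/-- The summability estimate 𝒥₃(A) ≲ A^{-δ₀}: condition j₃ ≥ A (Lemma 3.1, (JJA-2)):
sum over `k₂ ≥ k₁ ≥ 0` and `j₁, j₂, j₃ ≥ 1` of
`2^{-k₁δ₁} j₁^{-1-δ₁} j₂⁻¹ j₃⁻¹ (2^{-k₂}j₂⁻¹ + 2^{k₁-k₂}j₃⁻¹)^{δ₂₃} /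
(2^{k₁} j₁ j₂ j₃⁻¹ + 2^{-k₁} j₁⁻¹ j₂⁻¹ j₃)^θ`. -/
theorem stmt4 (δ₁ δ₂₃ θ : ℝ) (hδ₁ : δ₁ ∈ Set.Ioc (0:ℝ) 1) (hδ₂₃ : δ₂₃ ∈ Set.Ioc (0:ℝ) 1)
    (hθ : 0 < θ) (hθ' : θ < min δ₁ δ₂₃) :
    ∃ C : ℝ≥0∞, C ≠ ⊤ ∧ ∀ (A : ℝ), 1 ≤ A →
      (∑' k₁ : ℕ, ∑' k₂ : ℕ, ∑' j₁ : ℕ, ∑' j₂ : ℕ, ∑' j₃ : ℕ,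
          if k₁ ≤ k₂ ∧ 1 ≤ j₁ ∧ 1 ≤ j₂ ∧ 1 ≤ j₃ ∧ A ≤ (j₃ : ℝ) then
            (2 : ℝ≥0∞) ^ (-(k₁ : ℝ) * δ₁) * ((j₁ : ℝ≥0∞)) ^ (-(1 + δ₁)) *
              ((j₂ : ℝ≥0∞))⁻¹ * ((j₃ : ℝ≥0∞))⁻¹ *
              ((2 : ℝ≥0∞) ^ (-(k₂ : ℝ)) * ((j₂ : ℝ≥0∞))⁻¹ +
                  (2 : ℝ≥0∞) ^ ((k₁ : ℝ) - (k₂ : ℝ)) * ((j₃ : ℝ≥0∞))⁻¹) ^ δ₂₃ /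
              ((2 : ℝ≥0∞) ^ ((k₁ : ℝ)) * (j₁ : ℝ≥0∞) * (j₂ : ℝ≥0∞) * ((j₃ : ℝ≥0∞))⁻¹ +
                  (2 : ℝ≥0∞) ^ (-(k₁ : ℝ)) * ((j₁ : ℝ≥0∞))⁻¹ * ((j₂ : ℝ≥0∞))⁻¹ *
                    (j₃ : ℝ≥0∞)) ^ θ
          else 0)
        ≤ C * (ENNReal.ofReal A) ^ (-(min θ (min (δ₁ - θ) (δ₂₃ - θ)))) :=
  stmt4_general δ₁ δ₂₃ θ hδ₂₃ hθ hθ'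
end

section
/- Let F: [0,∞) → [0,∞) be a bounded, monotone decreasing function with lim_{t→∞} F(t) = 0, and let θ ∈ (0,1). Define F̃(s) := Σ_{k=0}^∞ 2^{-kθ} F(2^{-k} s) for s > 0. Then F̃ is finite, bounded, decreasing, satisfies lim_{s→∞} F̃(s) = 0, and there is a constant C (depending only on θ) such that for all s > 0, ∫₀¹ ∫₀¹ F(s·|x-y|) / |x-y|^{1-θ} dx dy ≤ C · F̃(s). -/
/-!
The strip `2⁻ᵏ < |x - y| ≤ 2¹⁻ᵏ` of the unit square has measure at most `4 · 2⁻ᵏ`, and since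
`ρ ↦ F(sρ) ρ^(θ-1)` is decreasing, the integrand there is at most `2^(k(1-θ)) F(2⁻ᵏ s)`.
Summing over `k` bounds the integral by `4 F̃(s)`. The remaining properties of `F̃` come from
dominating its terms by the geometric series `M 2^(-kθ)`, where `M` bounds `F`.
-/

open MeasureTheory Filter Set

noncomputable def dyadicTerm (F : ℝ → ℝ) (θ s : ℝ) (k : ℕ) : ℝ :=
  (2:ℝ) ^ (-(k:ℝ) * θ) * F ((2:ℝ) ^ (-(k:ℝ)) * s)

noncomputable def dyadicMajorant (F : ℝ → ℝ) (θ s : ℝ) : ℝ :=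
  ∑' k : ℕ, dyadicTerm F θ s k

lemma two_rpow_neg_natCast_mul (k : ℕ) (θ : ℝ) :
    (2:ℝ) ^ (-(k:ℝ) * θ) = ((2:ℝ) ^ (-θ)) ^ k := by
  rw [← Real.rpow_natCast, ← Real.rpow_mul zero_le_two]
  ring_nf

lemma two_rpow_neg_lt_one {θ : ℝ} (hθ : 0 < θ) : (2:ℝ) ^ (-θ) < 1 :=
  Real.rpow_lt_one_of_one_lt_of_neg one_lt_two (neg_neg_of_pos hθ)

section DyadicMajorant

variable {F : ℝ → ℝ} {θ s M : ℝ}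

lemma dyadicTerm_nonneg (hF0 : ∀ t, 0 ≤ t → 0 ≤ F t) (hs : 0 ≤ s) (k : ℕ) :
    0 ≤ dyadicTerm F θ s k :=
  mul_nonneg (by positivity) (hF0 _ (by positivity))

lemma dyadicTerm_le (hM : ∀ t, 0 ≤ t → F t ≤ M) (hs : 0 ≤ s) (k : ℕ) :
    dyadicTerm F θ s k ≤ M * ((2:ℝ) ^ (-θ)) ^ k := by
  rw [dyadicTerm, two_rpow_neg_natCast_mul, mul_comm]
  exact mul_le_mul_of_nonneg_right (hM _ (by positivity)) (by positivity)

lemma summable_geometric_two_rpow_neg (hθ : 0 < θ) (M : ℝ) :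
    Summable (fun k : ℕ => M * ((2:ℝ) ^ (-θ)) ^ k) :=
  (summable_geometric_of_lt_one (by positivity) (two_rpow_neg_lt_one hθ)).mul_left M

lemma summable_dyadicTerm (hθ : 0 < θ) (hF0 : ∀ t, 0 ≤ t → 0 ≤ F t)
    (hM : ∀ t, 0 ≤ t → F t ≤ M) (hs : 0 ≤ s) : Summable (dyadicTerm F θ s) :=
  (summable_geometric_two_rpow_neg hθ M).of_nonneg_of_le (dyadicTerm_nonneg hF0 hs)
    (dyadicTerm_le hM hs)

lemma dyadicMajorant_le (hθ : 0 < θ) (hF0 : ∀ t, 0 ≤ t → 0 ≤ F t)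
    (hM : ∀ t, 0 ≤ t → F t ≤ M) (hs : 0 ≤ s) :
    dyadicMajorant F θ s ≤ M * (1 - (2:ℝ) ^ (-θ))⁻¹ := by
  calc dyadicMajorant F θ s ≤ ∑' k : ℕ, M * ((2:ℝ) ^ (-θ)) ^ k :=
        (summable_dyadicTerm hθ hF0 hM hs).tsum_le_tsum (dyadicTerm_le hM hs)
          (summable_geometric_two_rpow_neg hθ M)
    _ = M * (1 - (2:ℝ) ^ (-θ))⁻¹ := by
        rw [tsum_mul_left, tsum_geometric_of_lt_one (by positivity) (two_rpow_neg_lt_one hθ)]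

lemma antitoneOn_dyadicMajorant (hθ : 0 < θ) (hF0 : ∀ t, 0 ≤ t → 0 ≤ F t)
    (hFanti : AntitoneOn F (Ici 0)) (hM : ∀ t, 0 ≤ t → F t ≤ M) :
    AntitoneOn (dyadicMajorant F θ) (Ioi 0) := by
  intro s hs t ht hst
  have hs : 0 < s := hs
  have ht : 0 < t := ht
  refine (summable_dyadicTerm hθ hF0 hM ht.le).tsum_le_tsum (fun k => ?_)
    (summable_dyadicTerm hθ hF0 hM hs.le)
  refine mul_le_mul_of_nonneg_left (hFanti ?_ ?_ ?_) (by positivity)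
  · exact mem_Ici.2 (by positivity)
  · exact mem_Ici.2 (by positivity)
  · exact mul_le_mul_of_nonneg_left hst (by positivity)

lemma tendsto_dyadicMajorant_atTop (hθ : 0 < θ) (hF0 : ∀ t, 0 ≤ t → 0 ≤ F t)
    (hM : ∀ t, 0 ≤ t → F t ≤ M) (hFlim : Tendsto F atTop (nhds 0)) :
    Tendsto (dyadicMajorant F θ) atTop (nhds 0) := by
  have h := tendsto_tsum_of_dominated_convergence (𝓕 := atTop) (f := dyadicTerm F θ)
    (g := fun _ => 0) (summable_geometric_two_rpow_neg hθ M) (fun k => ?_) ?_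
  · rwa [tsum_zero] at h
  · have hk := (hFlim.comp (tendsto_id.const_mul_atTop
      (by positivity : (0:ℝ) < 2 ^ (-(k:ℝ))))).const_mul ((2:ℝ) ^ (-(k:ℝ) * θ))
    rwa [mul_zero] at hk
  · filter_upwards [eventually_ge_atTop 0] with s hs k
    rw [Real.norm_of_nonneg (dyadicTerm_nonneg hF0 hs k)]
    exact dyadicTerm_le hM hs k

end DyadicMajorant

section DiagonalIntegral

variable {F : ℝ → ℝ} {θ s : ℝ}

lemma antitoneOn_div_rpow_one_sub (hF0 : ∀ t, 0 ≤ t → 0 ≤ F t)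
    (hFanti : AntitoneOn F (Ici 0)) (hθ : θ ≤ 1) (hs : 0 ≤ s) :
    AntitoneOn (fun ρ => F (s * ρ) / ρ ^ (1 - θ)) (Ioi 0) := by
  intro a ha b hb hab
  have ha : 0 < a := ha
  have hb : 0 < b := hb
  refine div_le_div₀ (hF0 _ (by positivity)) ?_ (by positivity)
    (Real.rpow_le_rpow ha.le hab (by linarith))
  exact hFanti (mem_Ici.2 (by positivity)) (mem_Ici.2 (by positivity))
    (mul_le_mul_of_nonneg_left hab hs)

lemma setLIntegral_abs_sub_mem_Ioc_le {G : ℝ → ℝ} (hG : AntitoneOn G (Ioi 0)) (x : ℝ)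
    {a : ℝ} (ha : 0 < a) :
    ∫⁻ y in (fun y => |x - y|) ⁻¹' Ioc a (2 * a), ENNReal.ofReal (G |x - y|)
      ≤ ENNReal.ofReal (4 * a * G a) := by
  have hS : MeasurableSet ((fun y => |x - y|) ⁻¹' Ioc a (2 * a)) :=
    measurableSet_Ioc.preimage (by fun_prop)
  have hsub : (fun y => |x - y|) ⁻¹' Ioc a (2 * a) ⊆ Icc (x - 2 * a) (x + 2 * a) := by
    intro y hy
    obtain ⟨h1, h2⟩ := abs_le.1 hy.2
    exact ⟨by linarith, by linarith⟩
  calc ∫⁻ y in (fun y => |x - y|) ⁻¹' Ioc a (2 * a), ENNReal.ofReal (G |x - y|)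
      ≤ ∫⁻ _ in (fun y => |x - y|) ⁻¹' Ioc a (2 * a), ENNReal.ofReal (G a) :=
        setLIntegral_mono' hS fun y hy =>
          ENNReal.ofReal_le_ofReal (hG ha (ha.trans hy.1) hy.1.le)
    _ = ENNReal.ofReal (G a) * volume ((fun y => |x - y|) ⁻¹' Ioc a (2 * a)) :=
        setLIntegral_const _ _
    _ ≤ ENNReal.ofReal (G a) * volume (Icc (x - 2 * a) (x + 2 * a)) := by
        gcongr
    _ = ENNReal.ofReal (4 * a * G a) := by
        rw [Real.volume_Icc, ← ENNReal.ofReal_mul' (by linarith)]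
        ring_nf

lemma exists_mem_Ioc_two_rpow_neg {ρ : ℝ} (h0 : 0 < ρ) (h1 : ρ ≤ 1) :
    ∃ k : ℕ, ρ ∈ Ioc ((2:ℝ) ^ (-(k:ℝ))) (2 * (2:ℝ) ^ (-(k:ℝ))) := by
  have hhalf : ∀ k : ℕ, (2:ℝ) ^ (-(k:ℝ)) = (1 / 2) ^ k := fun k => by
    rw [Real.rpow_neg zero_le_two, Real.rpow_natCast, one_div, inv_pow]
  obtain ⟨n, hlt, hle⟩ := exists_nat_pow_near_of_lt_one h0 h1 one_half_pos one_half_lt_one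
  refine ⟨n + 1, ?_, ?_⟩
  · rwa [Nat.cast_succ, ← Nat.cast_succ, hhalf]
  · rw [hhalf, pow_succ]
    linarith

lemma four_mul_two_rpow_neg_mul_div (k : ℕ) :
    4 * (2:ℝ) ^ (-(k:ℝ)) * (F (s * (2:ℝ) ^ (-(k:ℝ))) / ((2:ℝ) ^ (-(k:ℝ))) ^ (1 - θ))
      = 4 * dyadicTerm F θ s k := by
  have ha : (0:ℝ) < 2 ^ (-(k:ℝ)) := by positivity
  have hpow : ((2:ℝ) ^ (-(k:ℝ))) ^ θ = 2 ^ (-(k:ℝ)) / (2 ^ (-(k:ℝ))) ^ (1 - θ) := by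
    have h := Real.rpow_sub ha 1 (1 - θ)
    rwa [Real.rpow_one, sub_sub_cancel] at h
  rw [dyadicTerm, Real.rpow_mul zero_le_two, hpow, mul_comm s]
  ring

lemma setLIntegral_Icc_div_rpow_le (hF0 : ∀ t, 0 ≤ t → 0 ≤ F t)
    (hFanti : AntitoneOn F (Ici 0)) (hθ : θ ≤ 1) (hs : 0 ≤ s)
    (hsum : Summable (dyadicTerm F θ s)) {x : ℝ} (hx : x ∈ Icc (0:ℝ) 1) :
    ∫⁻ y in Icc (0:ℝ) 1, ENNReal.ofReal (F (s * |x - y|) / |x - y| ^ (1 - θ))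
      ≤ ENNReal.ofReal (4 * dyadicMajorant F θ s) := by
  set S : ℕ → Set ℝ := fun k =>
    (fun y => |x - y|) ⁻¹' Ioc ((2:ℝ) ^ (-(k:ℝ))) (2 * (2:ℝ) ^ (-(k:ℝ)))
  have hcover : Icc (0:ℝ) 1 ⊆ insert x (⋃ k, S k) := by
    intro y hy
    rcases eq_or_ne y x with rfl | hne
    · exact mem_insert _ _
    refine mem_insert_of_mem _ (mem_iUnion.2 (exists_mem_Ioc_two_rpow_neg ?_ ?_))
    · exact abs_pos.2 (sub_ne_zero.2 hne.symm)
    · exact abs_sub_le_iff.2 ⟨by linarith [hx.2, hy.1], by linarith [hx.1, hy.2]⟩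
  calc ∫⁻ y in Icc (0:ℝ) 1, ENNReal.ofReal (F (s * |x - y|) / |x - y| ^ (1 - θ))
      ≤ ∫⁻ y in ⋃ k, S k, ENNReal.ofReal (F (s * |x - y|) / |x - y| ^ (1 - θ)) :=
        lintegral_mono_set' (hcover.eventuallyLE.trans (insert_ae_eq_self x _).le)
    _ ≤ ∑' k, ∫⁻ y in S k, ENNReal.ofReal (F (s * |x - y|) / |x - y| ^ (1 - θ)) :=
        lintegral_iUnion_le _ _
    _ ≤ ∑' k, ENNReal.ofReal (4 * dyadicTerm F θ s k) := ENNReal.tsum_le_tsum fun k =>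
        (setLIntegral_abs_sub_mem_Ioc_le (antitoneOn_div_rpow_one_sub hF0 hFanti hθ hs) x
          (by positivity)).trans_eq (congrArg ENNReal.ofReal (four_mul_two_rpow_neg_mul_div k))
    _ = ENNReal.ofReal (4 * dyadicMajorant F θ s) := by
        rw [dyadicMajorant, ← tsum_mul_left, ENNReal.ofReal_tsum_of_nonneg
          (fun k => mul_nonneg zero_le_four (dyadicTerm_nonneg hF0 hs k)) (hsum.mul_left 4)]

lemma lintegral_unitSquare_div_rpow_le (hF0 : ∀ t, 0 ≤ t → 0 ≤ F t)
    (hFanti : AntitoneOn F (Ici 0)) (hθ : θ ≤ 1) (hs : 0 ≤ s)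
    (hsum : Summable (dyadicTerm F θ s)) :
    ∫⁻ x in Icc (0:ℝ) 1, ∫⁻ y in Icc (0:ℝ) 1,
        ENNReal.ofReal (F (s * |x - y|) / |x - y| ^ (1 - θ))
      ≤ ENNReal.ofReal (4 * dyadicMajorant F θ s) := by
  calc ∫⁻ x in Icc (0:ℝ) 1, ∫⁻ y in Icc (0:ℝ) 1,
        ENNReal.ofReal (F (s * |x - y|) / |x - y| ^ (1 - θ))
      ≤ ∫⁻ _ in Icc (0:ℝ) 1, ENNReal.ofReal (4 * dyadicMajorant F θ s) :=
        setLIntegral_mono' measurableSet_Icc fun x hx =>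
          setLIntegral_Icc_div_rpow_le hF0 hFanti hθ hs hsum hx
    _ = ENNReal.ofReal (4 * dyadicMajorant F θ s) := by
        rw [setLIntegral_const, Real.volume_Icc, sub_zero, ENNReal.ofReal_one, mul_one]

end DiagonalIntegral

/-- Diagonal integral estimate (IJD-2): for a bounded decreasing `F : [0,∞) → [0,∞)`
vanishing at infinity and `θ ∈ (0,1)`, the function
`F̃(s) := Σ_{k≥0} 2^{-kθ} F(2^{-k} s)` is finite, bounded, decreasing, tends to 0 at
infinity, and `∫₀¹∫₀¹ F(s|x-y|)/|x-y|^{1-θ} dx dy ≤ C F̃(s)` uniformly in `s > 0`. -/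
theorem stmt5 (F : ℝ → ℝ) (θ : ℝ) (hθ : θ ∈ Set.Ioo (0:ℝ) 1)
    (hF0 : ∀ t, 0 ≤ t → 0 ≤ F t) (hFanti : AntitoneOn F (Set.Ici 0))
    (hFbdd : ∃ M, ∀ t, 0 ≤ t → F t ≤ M)
    (hFlim : Tendsto F atTop (nhds 0)) :
    (∀ s : ℝ, 0 < s →
        Summable (fun k : ℕ => (2:ℝ) ^ (-(k:ℝ) * θ) * F ((2:ℝ) ^ (-(k:ℝ)) * s)))
    ∧ (∃ M, ∀ s : ℝ, 0 < s →
        (∑' k : ℕ, (2:ℝ) ^ (-(k:ℝ) * θ) * F ((2:ℝ) ^ (-(k:ℝ)) * s)) ≤ M)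
    ∧ AntitoneOn (fun s => ∑' k : ℕ, (2:ℝ) ^ (-(k:ℝ) * θ) * F ((2:ℝ) ^ (-(k:ℝ)) * s))
        (Set.Ioi 0)
    ∧ Tendsto (fun s => ∑' k : ℕ, (2:ℝ) ^ (-(k:ℝ) * θ) * F ((2:ℝ) ^ (-(k:ℝ)) * s))
        atTop (nhds 0)
    ∧ ∃ C : ℝ, 0 < C ∧ ∀ s : ℝ, 0 < s →
        (∫⁻ x in Set.Icc (0:ℝ) 1, ∫⁻ y in Set.Icc (0:ℝ) 1,
            ENNReal.ofReal (F (s * |x - y|) / |x - y| ^ (1 - θ)))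
          ≤ ENNReal.ofReal
              (C * ∑' k : ℕ, (2:ℝ) ^ (-(k:ℝ) * θ) * F ((2:ℝ) ^ (-(k:ℝ)) * s)) := by
  obtain ⟨hθ0, hθ1⟩ := hθ
  obtain ⟨M, hM⟩ := hFbdd
  have hsum : ∀ s, 0 ≤ s → Summable (dyadicTerm F θ s) := fun s hs =>
    summable_dyadicTerm hθ0 hF0 hM hs
  exact ⟨fun s hs => hsum s hs.le,
    ⟨_, fun s hs => dyadicMajorant_le hθ0 hF0 hM hs.le⟩,
    antitoneOn_dyadicMajorant hθ0 hF0 hFanti hM,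
    tendsto_dyadicMajorant_atTop hθ0 hF0 hM hFlim,
    4, four_pos, fun s hs =>
      lintegral_unitSquare_div_rpow_le hF0 hFanti hθ1.le hs.le (hsum s hs.le)⟩
end
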